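/- For an integer ℓ ≥ 2 let g_ℓ(u) := √3·u^ℓ / √((u+2)(6−5u)³) (defined for real u near 1) and set ξ_ℓ := (1/(12^ℓ·(ℓ−1)!)) · g_ℓ^{(ℓ−1)}(1), where g_ℓ^{(ℓ−1)} denotes the (ℓ−1)-st derivative. Then ξ_ℓ = 12^{−ℓ} · Σ_{j=0}^{ℓ−1} Σ_{i=0}^{ℓ−1−j} C(ℓ, ℓ−1−i−j) · B(−1/2, i) · B(−3/2, j) · 3^{−i} · (−5)^j, where C(n,k) is the ordinary binomial coefficient and B(α,i) := (∏_{t=0}^{i−1}(α−t))/i! is the generalized binomial coefficient. -/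

import Mathlib

open Real Nat Finset

/-- The function `g_ℓ(u) = √3·u^ℓ/√((u+2)(6−5u)³)`. -/
noncomputable def g (ℓ : ℕ) (u : ℝ) : ℝ :=
  Real.sqrt 3 * u ^ ℓ / Real.sqrt ((u + 2) * (6 - 5 * u) ^ 3)

/-- `ξ_ℓ`, the limiting probability that the root face of a random rooted planar map
is a pure `ℓ`-gon. -/
noncomputable def xi (ℓ : ℕ) : ℝ :=
  1 / ((12 : ℝ) ^ ℓ * ((ℓ - 1)! : ℝ)) * iteratedDeriv (ℓ - 1) (g ℓ) 1

/-- The generalized binomial coefficient `B(α, i) = α(α−1)⋯(α−i+1)/i!`. -/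
noncomputable def genBinom (α : ℝ) (i : ℕ) : ℝ :=
  (∏ t ∈ Finset.range i, (α - t)) / i !

/-!
`ξ_ℓ` is `12^{-ℓ}` times the `(ℓ-1)`-st Taylor coefficient of `g_ℓ` at `1`. Near `u = 1`,
`g_ℓ(u) = √3 (6 - 5u)^{-3/2} (2 + u)^{-1/2} u^ℓ`, and by the Leibniz rule the Taylor
coefficients of a product are the Cauchy product of those of its factors. At `u = 1` the
`j`-th coefficient of `(6 - 5u)^{-3/2}` is `B(-3/2, j) (-5)^j`, the `i`-th one of
`(2 + u)^{-1/2}` is `B(-1/2, i) 3^{-1/2-i}`, and the `k`-th one of `u^ℓ` is `C(ℓ, k)`.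
-/

section TaylorCoeff

variable {𝕜 : Type*} [NontriviallyNormedField 𝕜]

noncomputable def taylorCoeff (n : ℕ) (f : 𝕜 → 𝕜) (x : 𝕜) : 𝕜 :=
  iteratedDeriv n f x / n !

theorem taylorCoeff_fun_mul [CharZero 𝕜] {n : ℕ} {f h : 𝕜 → 𝕜} {x : 𝕜}
    (hf : ContDiffAt 𝕜 n f x) (hh : ContDiffAt 𝕜 n h x) :
    taylorCoeff n (fun y => f y * h y) x =
      ∑ i ∈ range (n + 1), taylorCoeff i f x * taylorCoeff (n - i) h x := by
  rw [taylorCoeff, iteratedDeriv_fun_mul hf hh, sum_div]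
  refine sum_congr rfl fun i hi => ?_
  rw [cast_choose 𝕜 (mem_range_succ_iff.1 hi), taylorCoeff, taylorCoeff]
  have : (n ! : 𝕜) ≠ 0 := cast_ne_zero.2 n.factorial_ne_zero
  field_simp

theorem taylorCoeff_const_mul (n : ℕ) (c : 𝕜) (f : 𝕜 → 𝕜) (x : 𝕜) :
    taylorCoeff n (fun y => c * f y) x = c * taylorCoeff n f x := by
  rw [taylorCoeff, taylorCoeff, iteratedDeriv_const_mul_field, mul_div_assoc]

theorem taylorCoeff_pow [CharZero 𝕜] (k ℓ : ℕ) (x : 𝕜) :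
    taylorCoeff k (· ^ ℓ) x = ℓ.choose k * x ^ (ℓ - k) := by
  rw [taylorCoeff, iteratedDeriv_pow, descFactorial_eq_factorial_mul_choose]
  push_cast
  rw [mul_assoc, mul_div_cancel_left₀ _ (cast_ne_zero.2 k.factorial_ne_zero)]

theorem iteratedDeriv_comp_const_mul_field (n : ℕ) (f : 𝕜 → 𝕜) (c : 𝕜) :
    iteratedDeriv n (fun y => f (c * y)) = fun y => c ^ n * iteratedDeriv n f (c * y) := by
  induction n with
  | zero => simp
  | succ n ih =>
    ext y
    rw [iteratedDeriv_succ, ih, iteratedDeriv_succ, deriv_const_mul_field,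
      deriv_comp_mul_left c (iteratedDeriv n f) y, smul_eq_mul, pow_succ, mul_assoc]

end TaylorCoeff

theorem genBinom_eq_descPochhammer_div (α : ℝ) (i : ℕ) :
    genBinom α i = (descPochhammer ℝ i).eval α / i ! := by
  rw [genBinom, descPochhammer_eval_eq_prod_range]

theorem taylorCoeff_affine_rpow (n : ℕ) (a b p x : ℝ) :
    taylorCoeff n (fun u => (a + b * u) ^ p) x =
      genBinom p n * b ^ n * (a + b * x) ^ (p - n) := by
  have hshift : iteratedDeriv n (fun y : ℝ => (a + y) ^ p) =
      fun y => (descPochhammer ℝ n).eval p * (a + y) ^ (p - n) := by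
    rw [iteratedDeriv_comp_const_add n (· ^ p) a, iteratedDeriv_eq_iterate]
    exact funext fun y => iter_deriv_rpow_const p (a + y) n
  rw [taylorCoeff, iteratedDeriv_comp_const_mul_field n (fun y => (a + y) ^ p) b, hshift,
    genBinom_eq_descPochhammer_div]
  ring

theorem contDiffAt_affine_rpow {n : ℕ} {a b p x : ℝ} (hx : a + b * x ≠ 0) :
    ContDiffAt ℝ n (fun u => (a + b * u) ^ p) x := by
  fun_prop (disch := assumption)

theorem inv_sqrt_mul_pow_three {a b : ℝ} (ha : 0 ≤ a) (hb : 0 ≤ b) :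
    (√(a * b ^ 3))⁻¹ = a ^ (-1 / 2 : ℝ) * b ^ (-3 / 2 : ℝ) := by
  rw [sqrt_mul ha, sqrt_eq_rpow, sqrt_eq_rpow, ← rpow_natCast, ← rpow_mul hb, mul_inv,
    ← rpow_neg ha, ← rpow_neg hb]
  norm_num

theorem sqrt_mul_rpow_neg_half_sub {a : ℝ} (ha : 0 < a) (i : ℕ) :
    √a * a ^ (-1 / 2 - i : ℝ) = a⁻¹ ^ i := by
  rw [sqrt_eq_rpow, ← rpow_add ha, show (1 / 2 + (-1 / 2 - i) : ℝ) = -i by ring,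
    rpow_neg ha.le, rpow_natCast, inv_pow]

/- The factors are ordered, and written as `a + b * u`, so that the Leibniz expansion
below matches the double sum term by term. -/
theorem g_eqOn (ℓ : ℕ) :
    Set.EqOn (g ℓ)
      (fun u => √3 * ((6 + -5 * u) ^ (-3 / 2 : ℝ) * ((2 + 1 * u) ^ (-1 / 2 : ℝ) * u ^ ℓ)))
      (Set.Ioo (-2) (6 / 5)) := by
  rintro u ⟨hu₁, hu₂⟩
  rw [g, div_eq_mul_inv, inv_sqrt_mul_pow_three (by linarith) (by linarith)]
  ring_nf

/-- Explicit finite double-sum formula for `ξ_ℓ`. -/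
theorem xi_explicit_formula (ℓ : ℕ) (hℓ : 2 ≤ ℓ) :
    xi ℓ = (12 : ℝ)⁻¹ ^ ℓ *
      ∑ j ∈ Finset.range ℓ, ∑ i ∈ Finset.range (ℓ - j),
        (ℓ.choose (ℓ - 1 - i - j) : ℝ) * genBinom (-1 / 2) i * genBinom (-3 / 2) j
          * ((3 : ℝ)⁻¹) ^ i * (-5 : ℝ) ^ j := by
  obtain ⟨n, rfl⟩ : ∃ n, ℓ = n + 1 := ⟨ℓ - 1, by omega⟩
  have hg := (g_eqOn (n + 1)).eventuallyEq_of_mem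
    (Ioo_mem_nhds (by norm_num : (-2 : ℝ) < 1) (by norm_num : (1 : ℝ) < 6 / 5))
  have hxi : xi (n + 1) = (12 : ℝ)⁻¹ ^ (n + 1) * taylorCoeff n (g (n + 1)) 1 := by
    rw [xi, taylorCoeff, add_tsub_cancel_right, inv_pow]
    field_simp
  have h₁ : (6 : ℝ) + -5 * 1 ≠ 0 := by norm_num
  have h₂ : (2 : ℝ) + 1 * 1 ≠ 0 := by norm_num
  rw [hxi, taylorCoeff, hg.iteratedDeriv_eq, ← taylorCoeff, taylorCoeff_const_mul,
    taylorCoeff_fun_mul (contDiffAt_affine_rpow h₁)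
      ((contDiffAt_affine_rpow h₂).mul (by fun_prop)), mul_sum]
  refine congrArg _ (sum_congr rfl fun j hj => ?_)
  rw [taylorCoeff_fun_mul (contDiffAt_affine_rpow h₂) (by fun_prop), taylorCoeff_affine_rpow,
    mul_sum, mul_sum, show n + 1 - j = n - j + 1 by have := mem_range.1 hj; omega]
  refine sum_congr rfl fun i _ => ?_
  rw [taylorCoeff_affine_rpow, taylorCoeff_pow, show n + 1 - 1 - i - j = n - j - i by omega,
    show (6 : ℝ) + -5 * 1 = 1 by norm_num, show (2 : ℝ) + 1 * 1 = 3 by norm_num, one_rpow,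
    one_pow, one_pow]
  linear_combination ((n + 1).choose (n - j - i) * genBinom (-1 / 2) i * genBinom (-3 / 2) j *
    (-5) ^ j) * sqrt_mul_rpow_neg_half_sub three_pos i
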